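/- arXiv:1908.04435 — 8 statements merged into one kernel-verified Lean document; each statement's English description precedes it below -/
import Mathlib

section
/- Let n ≥ 1, let M be an n×n complex matrix, and let B be a nonempty proper subset of its index set with complement B̄. Suppose (λ, v) is an eigenpair of M, i.e. M v = λ v with v ≠ 0, and λ is not an eigenvalue of the principal submatrix M_{B̄B̄}. Then the restriction v_B of v to the indices in B is nonzero and satisfies R_B(M;λ) v_B = λ v_B; that is, (λ, v_B) is an eigenpair of the isospectral reduction of M over B evaluated at λ. -/
open Matrix

lemma isUnit_det_sub_smul_one {m : Type*} [Fintype m] [DecidableEq m]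
    (E : Matrix m m ℂ) (lam : ℂ)
    (h : Polynomial.eval lam E.charpoly ≠ 0) :
    IsUnit (E - lam • (1 : Matrix m m ℂ)).det := by
  have h1 : Polynomial.eval lam E.charpoly = (lam • (1 : Matrix m m ℂ) - E).det := by
    rw [Matrix.charpoly, ← Polynomial.coe_evalRingHom, RingHom.map_det]
    congr 1
    ext i j
    by_cases hij : i = j <;>
      simp [charmatrix_apply, Matrix.one_apply, hij, Matrix.smul_apply]
  have h2 : (E - lam • (1 : Matrix m m ℂ)) = -(lam • (1 : Matrix m m ℂ) - E) := by abel
  rw [h2, Matrix.det_neg]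
  exact IsUnit.mul_iff.2 ⟨isUnit_iff_ne_zero.2 (pow_ne_zero _ (by norm_num)),
    isUnit_iff_ne_zero.2 (h1 ▸ h)⟩

/-- If `(λ, v)` is an eigenpair of an `n × n` complex matrix `M` and `λ` is
not an eigenvalue of the principal submatrix `M_{B̄B̄}`, then `(λ, v_B)` is an eigenpair of
the isospectral reduction `R_B(M;λ) = M_{BB} − M_{BB̄}(M_{B̄B̄} − λI)⁻¹M_{B̄B}`. -/
theorem eigenpair_of_isospectral_reduction
    {n : ℕ} (hn : 1 ≤ n) (M : Matrix (Fin n) (Fin n) ℂ)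
    (B : Finset (Fin n)) (hBne : B.Nonempty) (hBproper : B ≠ Finset.univ)
    (lam : ℂ) (v : Fin n → ℂ) (hv : v ≠ 0) (heig : M.mulVec v = lam • v)
    (hlam : Polynomial.eval lam
      (Matrix.charpoly (M.submatrix (Subtype.val : ↥(Bᶜ) → Fin n)
        (Subtype.val : ↥(Bᶜ) → Fin n))) ≠ 0) :
    (fun b : ↥B => v b) ≠ 0 ∧
    (M.submatrix (Subtype.val : ↥B → Fin n) (Subtype.val : ↥B → Fin n)
      - M.submatrix (Subtype.val : ↥B → Fin n) (Subtype.val : ↥(Bᶜ) → Fin n)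
        * (M.submatrix (Subtype.val : ↥(Bᶜ) → Fin n) (Subtype.val : ↥(Bᶜ) → Fin n)
            - lam • (1 : Matrix ↥(Bᶜ) ↥(Bᶜ) ℂ))⁻¹
        * M.submatrix (Subtype.val : ↥(Bᶜ) → Fin n) (Subtype.val : ↥B → Fin n)).mulVec
      (fun b : ↥B => v b)
      = lam • (fun b : ↥B => v b) := by
  classical
  set vB : ↥B → ℂ := fun b => v b with hvBdef
  set vC : ↥(Bᶜ) → ℂ := fun c => v c with hvCdef
  set A := M.submatrix (Subtype.val : ↥B → Fin n) (Subtype.val : ↥B → Fin n) with hA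
  set Cm := M.submatrix (Subtype.val : ↥B → Fin n) (Subtype.val : ↥(Bᶜ) → Fin n) with hCm
  set D := M.submatrix (Subtype.val : ↥(Bᶜ) → Fin n) (Subtype.val : ↥B → Fin n) with hD
  set E := M.submatrix (Subtype.val : ↥(Bᶜ) → Fin n) (Subtype.val : ↥(Bᶜ) → Fin n) with hE
  set N := E - lam • (1 : Matrix ↥(Bᶜ) ↥(Bᶜ) ℂ) with hN
  have hNdet : IsUnit N.det := isUnit_det_sub_smul_one E lam hlam
  have hNinv : N⁻¹ * N = 1 := Matrix.nonsing_inv_mul N hNdet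
  -- splitting of the eigenvalue equation
  have key : ∀ i : Fin n,
      (∑ b : ↥B, M i b * v b) + (∑ c : ↥(Bᶜ), M i c * v c) = lam * v i := by
    intro i
    have h1 : (∑ b : ↥B, M i b * v b) + (∑ c : ↥(Bᶜ), M i c * v c)
        = ∑ j, M i j * v j := by
      rw [Finset.sum_coe_sort B (fun j => M i j * v j),
        Finset.sum_coe_sort Bᶜ (fun j => M i j * v j), Finset.sum_add_sum_compl]
    rw [h1]
    have := congrFun heig i
    simpa [Matrix.mulVec, dotProduct, Pi.smul_apply, smul_eq_mul] using this
  have hrowB : A.mulVec vB + Cm.mulVec vC = lam • vB := by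
    funext b
    simp only [Pi.add_apply, Matrix.mulVec, dotProduct, Matrix.submatrix_apply,
      Pi.smul_apply, smul_eq_mul, hA, hCm, hvBdef, hvCdef]
    exact key b
  have hrowC : D.mulVec vB + E.mulVec vC = lam • vC := by
    funext c
    simp only [Pi.add_apply, Matrix.mulVec, dotProduct, Matrix.submatrix_apply,
      Pi.smul_apply, smul_eq_mul, hD, hE, hvBdef, hvCdef]
    exact key c
  have hN1 : N.mulVec vC = -(D.mulVec vB) := by
    rw [hN, Matrix.sub_mulVec, Matrix.smul_mulVec, Matrix.one_mulVec]
    have : E.mulVec vC = lam • vC - D.mulVec vB := by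
      rw [← hrowC]; abel
    rw [this]; abel
  have hvCeq : vC = -(N⁻¹.mulVec (D.mulVec vB)) := by
    have h2 : N⁻¹.mulVec (N.mulVec vC) = N⁻¹.mulVec (-(D.mulVec vB)) :=
      congrArg _ hN1
    rw [Matrix.mulVec_mulVec, hNinv, Matrix.one_mulVec, Matrix.mulVec_neg] at h2
    exact h2
  constructor
  · intro hz
    apply hv
    have hvC0 : vC = 0 := by
      rw [hvCeq, hz, Matrix.mulVec_zero, Matrix.mulVec_zero, neg_zero]
    funext i
    by_cases hi : i ∈ B
    · exact congrFun hz (⟨i, hi⟩ : ↥B)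
    · exact congrFun hvC0 (⟨i, Finset.mem_compl.2 hi⟩ : ↥(Bᶜ))
  · have h3 : N⁻¹.mulVec (D.mulVec vB) = -vC := by rw [hvCeq, neg_neg]
    rw [Matrix.sub_mulVec, ← Matrix.mulVec_mulVec, ← Matrix.mulVec_mulVec,
      h3, Matrix.mulVec_neg, sub_neg_eq_add, hrowB]
end

section
/- Let n ≥ 1, let M be an n×n complex matrix, and let B be a nonempty proper subset of its index set with complement B̄. Suppose λ ∈ ℂ is not an eigenvalue of M_{B̄B̄} and w ≠ 0 satisfies R_B(M;λ) w = λ w. Then the vector v defined by v_B = w and v_{B̄} = −(M_{B̄B̄} − λI)^{−1} M_{B̄B} w is a nonzero vector satisfying M v = λ v; that is, every eigenpair of the isospectral reduction at λ lifts to an eigenpair of M with the same eigenvalue. -/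
/-!
In block form with respect to `B` and `B̄`, the equation `M v = λ v` consists of the two rows
`M_{BB} v_B + M_{BB̄} v_{B̄} = λ v_B` and `M_{B̄B} v_B + M_{B̄B̄} v_{B̄} = λ v_{B̄}`.
Since `M_{B̄B̄} − λI` is invertible, the second row holds for
`v_{B̄} = −(M_{B̄B̄} − λI)⁻¹ M_{B̄B} w` whatever `w` is, and substituting this `v_{B̄}` turns the first row into `R_B(M;λ) w = λ w`.
The lift is nonzero because it restricts to `w` on `B`.
-/

open Matrix

namespace Matrix

variable {ι m n α R : Type*} [Fintype m] [Fintype n] [DecidableEq n] [CommRing R]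

theorem isUnit_det_sub_smul_one_of_isUnit_eval_charpoly {N : Matrix n n R} {t : R}
    (h : IsUnit (N.charpoly.eval t)) : IsUnit (N - t • (1 : Matrix n n R)).det := by
  rw [eval_charpoly] at h
  rw [← neg_sub, det_neg, smul_one_eq_diagonal, ← scalar_apply]
  exact ((isUnit_neg_one (α := R)).pow _).mul h

theorem mulVec_add_mulVec_neg_inv_mul_mulVec (P : Matrix m m R) (Q : Matrix m n R)
    (C : Matrix n m R) (A : Matrix n n R) (w : m → R) :
    P *ᵥ w + Q *ᵥ -((A⁻¹ * C) *ᵥ w) = (P - Q * A⁻¹ * C) *ᵥ w := by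
  rw [mulVec_neg, mulVec_mulVec, sub_mulVec, Matrix.mul_assoc, sub_eq_add_neg]

theorem mulVec_add_mulVec_neg_inv_sub_smul_one_mul_mulVec {C : Matrix n m R} {S : Matrix n n R}
    {t : R} (hS : IsUnit (S - t • (1 : Matrix n n R)).det) (w : m → R) :
    C *ᵥ w + S *ᵥ -(((S - t • 1)⁻¹ * C) *ᵥ w) = t • -(((S - t • 1)⁻¹ * C) *ᵥ w) := by
  set A := S - t • (1 : Matrix n n R)
  have hAu : A *ᵥ (A⁻¹ *ᵥ (C *ᵥ w)) = C *ᵥ w := by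
    rw [mulVec_mulVec, mul_nonsing_inv A hS, one_mulVec]
  rw [show S = A + t • 1 from (sub_add_cancel _ _).symm, add_mulVec, smul_mulVec, one_mulVec,
    mulVec_neg, ← mulVec_mulVec, hAu]
  abel

theorem comp_mulVec_eq_add_compl [Fintype ι] [DecidableEq ι] (M : Matrix ι ι R) (B : Finset ι)
    (r : α → ι) (v : ι → R) :
    (M *ᵥ v) ∘ r = M.submatrix r ((↑) : B → ι) *ᵥ (v ∘ (↑)) +
      M.submatrix r ((↑) : ↥Bᶜ → ι) *ᵥ (v ∘ (↑)) := by
  funext a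
  simp only [Function.comp_apply, Pi.add_apply, mulVec, dotProduct, submatrix_apply]
  rw [← Finset.sum_add_sum_compl B, ← Finset.sum_coe_sort B, ← Finset.sum_coe_sort Bᶜ]

end Matrix

theorem Finset.funext_of_comp_val_of_comp_val_compl {ι β : Type*} [DecidableEq ι] [Fintype ι]
    {B : Finset ι} {f g : ι → β} (hB : f ∘ ((↑) : B → ι) = g ∘ (↑))
    (hBc : f ∘ ((↑) : ↥Bᶜ → ι) = g ∘ (↑)) : f = g := by
  funext x
  by_cases hx : x ∈ B
  · exact congrFun hB ⟨x, hx⟩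
  · exact congrFun hBc ⟨x, Finset.mem_compl.mpr hx⟩

theorem eigenpair_lifts_from_isospectral_reduction_general
    {n : ℕ} (M : Matrix (Fin n) (Fin n) ℂ) (B : Finset (Fin n))
    (lam : ℂ) (w : ↥B → ℂ) (hw : w ≠ 0)
    (hlam : Polynomial.eval lam
      (Matrix.charpoly (M.submatrix (Subtype.val : ↥(Bᶜ) → Fin n)
        (Subtype.val : ↥(Bᶜ) → Fin n))) ≠ 0)
    (heig : (M.submatrix (Subtype.val : ↥B → Fin n) (Subtype.val : ↥B → Fin n)
      - M.submatrix (Subtype.val : ↥B → Fin n) (Subtype.val : ↥(Bᶜ) → Fin n)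
        * (M.submatrix (Subtype.val : ↥(Bᶜ) → Fin n) (Subtype.val : ↥(Bᶜ) → Fin n)
            - lam • (1 : Matrix ↥(Bᶜ) ↥(Bᶜ) ℂ))⁻¹
        * M.submatrix (Subtype.val : ↥(Bᶜ) → Fin n) (Subtype.val : ↥B → Fin n)).mulVec w
      = lam • w) :
    let v : Fin n → ℂ := fun x =>
      if hx : x ∈ B then w ⟨x, hx⟩
      else (-(((M.submatrix (Subtype.val : ↥(Bᶜ) → Fin n) (Subtype.val : ↥(Bᶜ) → Fin n)
            - lam • (1 : Matrix ↥(Bᶜ) ↥(Bᶜ) ℂ))⁻¹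
          * M.submatrix (Subtype.val : ↥(Bᶜ) → Fin n) (Subtype.val : ↥B → Fin n)).mulVec w))
        ⟨x, Finset.mem_compl.mpr hx⟩
    v ≠ 0 ∧ M.mulVec v = lam • v := by
  intro v
  have hv : v ∘ ((↑) : B → Fin n) = w := funext fun y => dif_pos y.2
  have hvc : v ∘ ((↑) : ↥Bᶜ → Fin n) =
      -(((M.submatrix (Subtype.val : ↥Bᶜ → Fin n) Subtype.val - lam • 1)⁻¹ *
        M.submatrix Subtype.val (Subtype.val : B → Fin n)) *ᵥ w) :=
    funext fun y => dif_neg (Finset.mem_compl.mp y.2)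
  have hunit := isUnit_det_sub_smul_one_of_isUnit_eval_charpoly (isUnit_iff_ne_zero.mpr hlam)
  refine ⟨fun h => hw (hv ▸ h ▸ rfl),
    Finset.funext_of_comp_val_of_comp_val_compl (B := B) ?_ ?_⟩
  · rw [comp_mulVec_eq_add_compl M B, hv, hvc, mulVec_add_mulVec_neg_inv_mul_mulVec, heig,
      Pi.smul_comp, hv]
  · rw [comp_mulVec_eq_add_compl M B, hv, hvc,
      mulVec_add_mulVec_neg_inv_sub_smul_one_mul_mulVec hunit, Pi.smul_comp, hvc]

/-- Every eigenpair `(λ, w)` of the isospectral reduction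
`R_B(M;λ) = M_{BB} − M_{BB̄}(M_{B̄B̄} − λI)⁻¹M_{B̄B}` (with `λ` not an eigenvalue of
`M_{B̄B̄}`) lifts to an eigenpair of `M`: the vector `v` with `v_B = w` and
`v_{B̄} = −(M_{B̄B̄} − λI)⁻¹ M_{B̄B} w` is nonzero and satisfies `M v = λ v`. -/
theorem eigenpair_lifts_from_isospectral_reduction
    {n : ℕ} (hn : 1 ≤ n) (M : Matrix (Fin n) (Fin n) ℂ)
    (B : Finset (Fin n)) (hBne : B.Nonempty) (hBproper : B ≠ Finset.univ)
    (lam : ℂ) (w : ↥B → ℂ) (hw : w ≠ 0)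
    (hlam : Polynomial.eval lam
      (Matrix.charpoly (M.submatrix (Subtype.val : ↥(Bᶜ) → Fin n)
        (Subtype.val : ↥(Bᶜ) → Fin n))) ≠ 0)
    (heig : (M.submatrix (Subtype.val : ↥B → Fin n) (Subtype.val : ↥B → Fin n)
      - M.submatrix (Subtype.val : ↥B → Fin n) (Subtype.val : ↥(Bᶜ) → Fin n)
        * (M.submatrix (Subtype.val : ↥(Bᶜ) → Fin n) (Subtype.val : ↥(Bᶜ) → Fin n)
            - lam • (1 : Matrix ↥(Bᶜ) ↥(Bᶜ) ℂ))⁻¹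
        * M.submatrix (Subtype.val : ↥(Bᶜ) → Fin n) (Subtype.val : ↥B → Fin n)).mulVec w
      = lam • w) :
    let v : Fin n → ℂ := fun x =>
      if hx : x ∈ B then w ⟨x, hx⟩
      else (-(((M.submatrix (Subtype.val : ↥(Bᶜ) → Fin n) (Subtype.val : ↥(Bᶜ) → Fin n)
            - lam • (1 : Matrix ↥(Bᶜ) ↥(Bᶜ) ℂ))⁻¹
          * M.submatrix (Subtype.val : ↥(Bᶜ) → Fin n) (Subtype.val : ↥B → Fin n)).mulVec w))
        ⟨x, Finset.mem_compl.mpr hx⟩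
    v ≠ 0 ∧ M.mulVec v = lam • v :=
  eigenpair_lifts_from_isospectral_reduction_general M B lam w hw hlam heig
end

section
/- Let M and M̂ be as in the single-component specialization construction, and write M̂ in block form M̂ = [[U, Ŷ], [Ŵ, Ẑ]] with respect to the splitting B ⊕ (P × C), where Ẑ is the block-diagonal matrix with one copy of Z for each element of P. Then for every λ ∈ ℂ that is not a root of the characteristic polynomial of Z, one has Ŷ (λI − Ẑ)^{−1} Ŵ = Σ_{i=1}^{y} Σ_{j=1}^{w} Y_i (λI − Z)^{−1} W_j = Y (λI − Z)^{−1} W (all matrices viewed as complex matrices). In particular, the isospectral reductions of M̂ and of M onto the base block B coincide: U + Ŷ(λI − Ẑ)^{−1}Ŵ = U + Y(λI − Z)^{−1}W. -/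
/-! Under the splitting `P × C`, `λI − Ẑ` is the Kronecker product `I_P ⊗ (λI − Z)`, so its inverse
is `I_P ⊗ (λI − Z)⁻¹`. Multiplying the block row `Ŷ = (Y_{p.1})_p`, this block-diagonal matrix and
the block column `Ŵ = (W_{p.2})_p` gives `Σ_p Y_{p.1} (λI − Z)⁻¹ W_{p.2}`, a double sum over
`P = {1,…,y} × {1,…,w}` that factors as `Y (λI − Z)⁻¹ W`. -/

open Matrix

/-- The `(B, P×C)` block `Ŷ` of the specialization, as a complex matrix. -/
def Yhat {l m y w : ℕ} (Y : Fin y → Matrix (Fin l) (Fin m) ℝ) :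
    Matrix (Fin l) ((Fin y × Fin w) × Fin m) ℂ :=
  fun a pc => (Y pc.1.1 a pc.2 : ℂ)

/-- The `(P×C, B)` block `Ŵ` of the specialization, as a complex matrix. -/
def What {l m y w : ℕ} (W : Fin w → Matrix (Fin m) (Fin l) ℝ) :
    Matrix ((Fin y × Fin w) × Fin m) (Fin l) ℂ :=
  fun pr b => (W pr.1.2 pr.2 b : ℂ)

/-- The `(P×C, P×C)` block `Ẑ` of the specialization (block diagonal with copies of `Z`),
as a complex matrix. -/
def Zhat {m : ℕ} (y w : ℕ) (Z : Matrix (Fin m) (Fin m) ℝ) :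
    Matrix ((Fin y × Fin w) × Fin m) ((Fin y × Fin w) × Fin m) ℂ :=
  fun pr qc => if pr.1 = qc.1 then (Z pr.2 qc.2 : ℂ) else 0

open scoped Kronecker

namespace Matrix

variable {ι l m n α : Type*}

def blockRow (X : ι → Matrix l m α) : Matrix l (ι × m) α :=
  of fun a pc => X pc.1 a pc.2

def blockCol (X : ι → Matrix m n α) : Matrix (ι × m) n α :=
  of fun pc b => X pc.1 pc.2 b

theorem blockRow_mul_one_kronecker [Fintype ι] [Fintype m] [DecidableEq ι] [Semiring α]
    (X : ι → Matrix l m α) (N : Matrix m m α) :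
    blockRow X * ((1 : Matrix ι ι α) ⊗ₖ N) = blockRow fun p => X p * N := by
  ext a ⟨p, c⟩
  simp [blockRow, mul_apply, Fintype.sum_prod_type, one_apply]

theorem blockRow_mul_blockCol [Fintype ι] [Fintype m] [NonUnitalNonAssocSemiring α]
    (X : ι → Matrix l m α) (V : ι → Matrix m n α) :
    blockRow X * blockCol V = ∑ p, X p * V p := by
  ext a b
  simp [blockRow, blockCol, mul_apply, Fintype.sum_prod_type, sum_apply]

theorem smul_one_sub_one_kronecker [Fintype ι] [DecidableEq ι] [DecidableEq m] [CommRing α]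
    (r : α) (N : Matrix m m α) :
    r • (1 : Matrix (ι × m) (ι × m) α) - (1 : Matrix ι ι α) ⊗ₖ N
      = (1 : Matrix ι ι α) ⊗ₖ (r • 1 - N) := by
  ext ⟨p, c⟩ ⟨q, d⟩
  by_cases h : p = q <;> simp [one_apply, h, mul_sub]

theorem sum_mul_mul_sum [Fintype m] [Fintype n] [NonUnitalNonAssocSemiring α] {κ : Type*}
    (s : Finset ι) (t : Finset κ) (A : ι → Matrix l m α) (R : Matrix m n α) (B : κ → Matrix n l α) :
    (∑ i ∈ s, A i) * R * (∑ j ∈ t, B j) = ∑ i ∈ s, ∑ j ∈ t, A i * R * B j := by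
  rw [Matrix.sum_mul, Matrix.sum_mul]
  simp only [Matrix.mul_sum]

end Matrix

section Specialization

variable {l m y w : ℕ}

theorem Zhat_eq_one_kronecker (Z : Matrix (Fin m) (Fin m) ℝ) :
    Zhat y w Z = (1 : Matrix (Fin y × Fin w) (Fin y × Fin w) ℂ) ⊗ₖ Z.map Complex.ofReal := by
  ext ⟨p, c⟩ ⟨q, d⟩
  by_cases h : p = q <;> simp [Zhat, one_apply, h]

theorem Yhat_mul_inv_mul_What (Z : Matrix (Fin m) (Fin m) ℝ)
    (Y : Fin y → Matrix (Fin l) (Fin m) ℝ) (W : Fin w → Matrix (Fin m) (Fin l) ℝ) (lam : ℂ) :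
    Yhat (w := w) Y * (lam • (1 : Matrix ((Fin y × Fin w) × Fin m) ((Fin y × Fin w) × Fin m) ℂ)
        - Zhat y w Z)⁻¹ * What (y := y) W
      = ∑ i, ∑ j, (Y i).map Complex.ofReal
          * (lam • (1 : Matrix (Fin m) (Fin m) ℂ) - Z.map Complex.ofReal)⁻¹
          * (W j).map Complex.ofReal := by
  have hY : Yhat (w := w) Y = blockRow fun p => (Y p.1).map Complex.ofReal := rfl
  have hW : What (y := y) W = blockCol fun p => (W p.2).map Complex.ofReal := rfl
  rw [hY, hW, Zhat_eq_one_kronecker, smul_one_sub_one_kronecker, inv_kronecker, inv_one,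
    blockRow_mul_one_kronecker, blockRow_mul_blockCol, Fintype.sum_prod_type]

theorem map_ofReal_sum {ι a b : Type*} [Fintype ι] (A : ι → Matrix a b ℝ) :
    (∑ i, A i).map Complex.ofReal = ∑ i, (A i).map Complex.ofReal :=
  map_sum (AddMonoidHom.mapMatrix Complex.ofRealHom.toAddMonoidHom) A Finset.univ

theorem sum_sum_map_ofReal_mul_mul {ι κ a b c : Type*} [Fintype ι] [Fintype κ] [Fintype b]
    [Fintype c] (A : ι → Matrix a b ℝ) (R : Matrix b c ℂ) (B : κ → Matrix c a ℝ) :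
    ∑ i, ∑ j, (A i).map Complex.ofReal * R * (B j).map Complex.ofReal
      = (∑ i, A i).map Complex.ofReal * R * (∑ j, B j).map Complex.ofReal := by
  rw [map_ofReal_sum, map_ofReal_sum, sum_mul_mul_sum]

end Specialization

theorem specialization_block_reduction_eq_general
    {l m y w : ℕ}
    (U : Matrix (Fin l) (Fin l) ℝ) (Z : Matrix (Fin m) (Fin m) ℝ)
    (Y : Fin y → Matrix (Fin l) (Fin m) ℝ) (W : Fin w → Matrix (Fin m) (Fin l) ℝ)
    (lam : ℂ) :
    Yhat (w := w) Y * (lam • (1 : Matrix ((Fin y × Fin w) × Fin m) ((Fin y × Fin w) × Fin m) ℂ)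
        - Zhat y w Z)⁻¹ * What (y := y) W
      = ∑ i : Fin y, ∑ j : Fin w,
          (Y i).map Complex.ofReal
            * (lam • (1 : Matrix (Fin m) (Fin m) ℂ) - Z.map Complex.ofReal)⁻¹
            * (W j).map Complex.ofReal
    ∧ (∑ i : Fin y, ∑ j : Fin w,
          (Y i).map Complex.ofReal
            * (lam • (1 : Matrix (Fin m) (Fin m) ℂ) - Z.map Complex.ofReal)⁻¹
            * (W j).map Complex.ofReal)
      = ((∑ i, Y i).map Complex.ofReal)
          * (lam • (1 : Matrix (Fin m) (Fin m) ℂ) - Z.map Complex.ofReal)⁻¹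
          * ((∑ j, W j).map Complex.ofReal)
    ∧ U.map Complex.ofReal
        + Yhat (w := w) Y * (lam • (1 : Matrix ((Fin y × Fin w) × Fin m) ((Fin y × Fin w) × Fin m) ℂ)
            - Zhat y w Z)⁻¹ * What (y := y) W
      = U.map Complex.ofReal
        + ((∑ i, Y i).map Complex.ofReal)
            * (lam • (1 : Matrix (Fin m) (Fin m) ℂ) - Z.map Complex.ofReal)⁻¹
            * ((∑ j, W j).map Complex.ofReal) := by
  have hblock := Yhat_mul_inv_mul_What Z Y W lam
  have hsum := sum_sum_map_ofReal_mul_mul Y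
    (lam • (1 : Matrix (Fin m) (Fin m) ℂ) - Z.map Complex.ofReal)⁻¹ W
  exact ⟨hblock, hsum, by rw [hblock, hsum]⟩

/-- For `λ` not a root of the characteristic polynomial of `Z`,
`Ŷ (λI − Ẑ)⁻¹ Ŵ = Σᵢ Σⱼ Yᵢ (λI − Z)⁻¹ Wⱼ = Y (λI − Z)⁻¹ W`, and in particular the
isospectral reductions of `M̂` and `M` onto the base block `B` coincide. -/
theorem specialization_block_reduction_eq
    {l m y w : ℕ} (hl : 1 ≤ l) (hm : 1 ≤ m) (hy : 1 ≤ y) (hw : 1 ≤ w)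
    (U : Matrix (Fin l) (Fin l) ℝ) (Z : Matrix (Fin m) (Fin m) ℝ)
    (Y : Fin y → Matrix (Fin l) (Fin m) ℝ) (W : Fin w → Matrix (Fin m) (Fin l) ℝ)
    (lam : ℂ)
    (hlam : Polynomial.eval lam (Matrix.charpoly (Z.map Complex.ofReal)) ≠ 0) :
    Yhat (w := w) Y * (lam • (1 : Matrix ((Fin y × Fin w) × Fin m) ((Fin y × Fin w) × Fin m) ℂ)
        - Zhat y w Z)⁻¹ * What (y := y) W
      = ∑ i : Fin y, ∑ j : Fin w,
          (Y i).map Complex.ofReal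
            * (lam • (1 : Matrix (Fin m) (Fin m) ℂ) - Z.map Complex.ofReal)⁻¹
            * (W j).map Complex.ofReal
    ∧ (∑ i : Fin y, ∑ j : Fin w,
          (Y i).map Complex.ofReal
            * (lam • (1 : Matrix (Fin m) (Fin m) ℂ) - Z.map Complex.ofReal)⁻¹
            * (W j).map Complex.ofReal)
      = ((∑ i, Y i).map Complex.ofReal)
          * (lam • (1 : Matrix (Fin m) (Fin m) ℂ) - Z.map Complex.ofReal)⁻¹
          * ((∑ j, W j).map Complex.ofReal)
    ∧ U.map Complex.ofReal
        + Yhat (w := w) Y * (lam • (1 : Matrix ((Fin y × Fin w) × Fin m) ((Fin y × Fin w) × Fin m) ℂ)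
            - Zhat y w Z)⁻¹ * What (y := y) W
      = U.map Complex.ofReal
        + ((∑ i, Y i).map Complex.ofReal)
            * (lam • (1 : Matrix (Fin m) (Fin m) ℂ) - Z.map Complex.ofReal)⁻¹
            * ((∑ j, W j).map Complex.ofReal) :=
  specialization_block_reduction_eq_general U Z Y W lam
end

section
/- Let M and M̂ be as in the single-component specialization construction. Suppose (λ, u) is an eigenpair of M (viewed as a complex matrix), i.e. M u = λ u with u ≠ 0, and λ is not a root of the characteristic polynomial of Z. Then there exists a nonzero vector v with M̂ v = λ v whose restriction to the base block B equals the restriction of u to B: v_B = u_B. -/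
open Matrix

/-- The single-component specialization `M̂` of the block matrix `M = [[U, ΣY_i],[ΣW_j, Z]]`:
indices `B ⊕ (P × C)` with `P = Fin y × Fin w`; its `(B,B)` block is `U`, its
`(B, {(i,j)}×C)` block is `Y i`, its `({(i,j)}×C, B)` block is `W j`, its diagonal
`({(i,j)}×C, {(i,j)}×C)` blocks are `Z`, and all blocks between distinct copies are zero. -/
def specialization {l m y w : ℕ}
    (U : Matrix (Fin l) (Fin l) ℝ) (Z : Matrix (Fin m) (Fin m) ℝ)
    (Y : Fin y → Matrix (Fin l) (Fin m) ℝ) (W : Fin w → Matrix (Fin m) (Fin l) ℝ) :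
    Matrix (Fin l ⊕ ((Fin y × Fin w) × Fin m)) (Fin l ⊕ ((Fin y × Fin w) × Fin m)) ℝ :=
  fun r c =>
    match r, c with
    | Sum.inl a, Sum.inl b => U a b
    | Sum.inl a, Sum.inr ((i, _), c') => Y i a c'
    | Sum.inr ((_, j), r'), Sum.inl b => W j r' b
    | Sum.inr (p, r'), Sum.inr (q, c') => if p = q then Z r' c' else 0

/-- The original block matrix `M = [[U, Y],[W, Z]]` with `Y = ΣY_i`, `W = ΣW_j`. -/
def origMatrix {l m y w : ℕ}
    (U : Matrix (Fin l) (Fin l) ℝ) (Z : Matrix (Fin m) (Fin m) ℝ)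
    (Y : Fin y → Matrix (Fin l) (Fin m) ℝ) (W : Fin w → Matrix (Fin m) (Fin l) ℝ) :
    Matrix (Fin l ⊕ Fin m) (Fin l ⊕ Fin m) ℝ :=
  Matrix.fromBlocks U (∑ i, Y i) (∑ j, W j) Z

lemma sum_mulVec' {n k : Type*} [Fintype n] [Fintype k] {ι : Type*} (s : Finset ι)
    (M : ι → Matrix n k ℂ) (v : k → ℂ) :
    (∑ i ∈ s, M i).mulVec v = ∑ i ∈ s, (M i).mulVec v := by
  ext j
  simp [Matrix.mulVec, dotProduct, Matrix.sum_apply, Finset.sum_mul]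
  exact Finset.sum_comm

lemma mulVec_sum' {n k : Type*} [Fintype n] [Fintype k] {ι : Type*} (s : Finset ι)
    (M : Matrix n k ℂ) (v : ι → k → ℂ) :
    M.mulVec (∑ i ∈ s, v i) = ∑ i ∈ s, M.mulVec (v i) := by
  ext j
  simp [Matrix.mulVec, dotProduct, Finset.mul_sum, Finset.sum_apply]
  exact Finset.sum_comm

/-- if `(λ, u)` is an eigenpair of `M` (as a complex matrix) and `λ` is not a
root of the characteristic polynomial of `Z`, then there is a nonzero vector `v` with
`M̂ v = λ v` and `v_B = u_B`. -/
theorem specialization_eigenvector_exists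
    {l m y w : ℕ} (hl : 1 ≤ l) (hm : 1 ≤ m) (hy : 1 ≤ y) (hw : 1 ≤ w)
    (U : Matrix (Fin l) (Fin l) ℝ) (Z : Matrix (Fin m) (Fin m) ℝ)
    (Y : Fin y → Matrix (Fin l) (Fin m) ℝ) (W : Fin w → Matrix (Fin m) (Fin l) ℝ)
    (lam : ℂ) (u : (Fin l ⊕ Fin m) → ℂ) (hu : u ≠ 0)
    (heig : ((origMatrix U Z Y W).map Complex.ofReal).mulVec u = lam • u)
    (hlam : Polynomial.eval lam (Matrix.charpoly (Z.map Complex.ofReal)) ≠ 0) :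
    ∃ v : (Fin l ⊕ ((Fin y × Fin w) × Fin m)) → ℂ,
      v ≠ 0
      ∧ ((specialization U Z Y W).map Complex.ofReal).mulVec v = lam • v
      ∧ ∀ b : Fin l, v (Sum.inl b) = u (Sum.inl b) := by
  classical
  set ua : Fin l → ℂ := fun b => u (Sum.inl b) with hua
  set uc : Fin m → ℂ := fun c => u (Sum.inr c) with hucdef
  set Uc := U.map (Complex.ofReal) with hUc
  set Zc := Z.map (Complex.ofReal) with hZcdef
  set Yc : Fin y → Matrix (Fin l) (Fin m) ℂ := fun i => (Y i).map Complex.ofReal with hYc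
  set Wc : Fin w → Matrix (Fin m) (Fin l) ℂ := fun j => (W j).map Complex.ofReal with hWc
  have hYsum : ((∑ i, Y i).map Complex.ofReal) = ∑ i, Yc i := by
    ext a b; simp [Matrix.map_apply, Matrix.sum_apply, Yc]
  have hWsum : ((∑ j, W j).map Complex.ofReal) = ∑ j, Wc j := by
    ext a b; simp [Matrix.map_apply, Matrix.sum_apply, Wc]
  -- block equations
  rw [origMatrix, Matrix.fromBlocks_map, Matrix.fromBlocks_mulVec] at heig
  have h1 : Uc.mulVec ua + ((∑ i, Y i).map Complex.ofReal).mulVec uc = lam • ua := by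
    funext b; exact congrFun heig (Sum.inl b)
  have h2 : ((∑ j, W j).map Complex.ofReal).mulVec ua + Zc.mulVec uc = lam • uc := by
    funext c; exact congrFun heig (Sum.inr c)
  -- invertibility
  set A : Matrix (Fin m) (Fin m) ℂ := lam • 1 - Zc with hAdef
  have hdeteq : A.det = Polynomial.eval lam (Matrix.charpoly Zc) := by
    rw [Matrix.charpoly, ← Polynomial.coe_evalRingHom, RingHom.map_det]
    congr 1
    ext i j
    by_cases h : i = j <;>
      simp [h, RingHom.mapMatrix_apply, Matrix.charmatrix_apply, Matrix.map_apply, A,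
        Matrix.sub_apply, Matrix.smul_apply, Matrix.one_apply, Matrix.diagonal_apply]
  have hdet : IsUnit A.det := by
    rw [hdeteq]; exact Ne.isUnit hlam
  have hAmul : ∀ x : Fin m → ℂ, A.mulVec x = lam • x - Zc.mulVec x := by
    intro x
    rw [hAdef, Matrix.sub_mulVec, Matrix.smul_mulVec, Matrix.one_mulVec]
  have hAuc : A.mulVec uc = ((∑ j, W j).map Complex.ofReal).mulVec ua := by
    rw [hAmul, ← h2]; abel
  have hucval : uc = A⁻¹.mulVec (((∑ j, W j).map Complex.ofReal).mulVec ua) := by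
    rw [← hAuc, Matrix.mulVec_mulVec, Matrix.nonsing_inv_mul A hdet, Matrix.one_mulVec]
  set s : Fin y × Fin w → Fin m → ℂ := fun p => A⁻¹.mulVec ((Wc p.2).mulVec ua) with hsdef
  have hs : ∀ p, A.mulVec (s p) = (Wc p.2).mulVec ua := by
    intro p
    rw [hsdef]
    simp only [Matrix.mulVec_mulVec, ← Matrix.mul_assoc,
      Matrix.mul_nonsing_inv A hdet, Matrix.one_mul]
  have hs2 : ∀ p, (Wc p.2).mulVec ua + Zc.mulVec (s p) = lam • s p := by
    intro p
    rw [← hs p, hAmul]; abel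
  have hsumj : ∀ i : Fin y, ∑ j : Fin w, s (i, j) = uc := by
    intro i
    rw [hucval, hWsum, sum_mulVec', mulVec_sum']
  have hYsum2 : ∑ p : Fin y × Fin w, (Yc p.1).mulVec (s p)
      = ((∑ i, Y i).map Complex.ofReal).mulVec uc := by
    rw [hYsum, sum_mulVec', Fintype.sum_prod_type]
    refine Finset.sum_congr rfl fun i _ => ?_
    show ∑ j : Fin w, (Yc i).mulVec (s (i, j)) = (Yc i).mulVec uc
    rw [← mulVec_sum', hsumj]
  -- the candidate vector
  set v : (Fin l ⊕ ((Fin y × Fin w) × Fin m)) → ℂ :=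
    Sum.elim ua (fun pc => s pc.1 pc.2) with hvdef
  have hvB : ∀ b : Fin l, v (Sum.inl b) = u (Sum.inl b) := fun b => rfl
  have hua_ne : ua ≠ 0 := by
    intro h0
    apply hu
    have huc0 : uc = 0 := by
      rw [hucval, h0]; simp
    funext x
    cases x with
    | inl b => exact congrFun h0 b
    | inr c => exact congrFun huc0 c
  refine ⟨v, ?_, ?_, hvB⟩
  · intro h0
    apply hua_ne
    funext b
    exact congrFun h0 (Sum.inl b)
  · funext x
    cases x with
    | inl b =>
      have hb := congrFun h1 b
      simp only [Pi.add_apply, Pi.smul_apply, smul_eq_mul] at hb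
      simp only [Matrix.mulVec, dotProduct, Pi.smul_apply, smul_eq_mul,
        Fintype.sum_sum_type, specialization, Matrix.map_apply, hvdef, Sum.elim_inl,
        Sum.elim_inr]
      rw [show (∑ x : (Fin y × Fin w) × Fin m,
            (Complex.ofReal (Y x.1.1 b x.2)) * s x.1 x.2)
          = (((∑ i, Y i).map Complex.ofReal).mulVec uc) b from ?_, ← hb]
      · rfl
      · calc ∑ x : (Fin y × Fin w) × Fin m, (Complex.ofReal (Y x.1.1 b x.2)) * s x.1 x.2
            = ∑ p : Fin y × Fin w, ∑ c : Fin m, (Complex.ofReal (Y p.1 b c)) * s p c := by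
              rw [Fintype.sum_prod_type]
          _ = ∑ p : Fin y × Fin w, ((Yc p.1).mulVec (s p)) b := rfl
          _ = (∑ p : Fin y × Fin w, (Yc p.1).mulVec (s p)) b := by rw [Finset.sum_apply]
          _ = _ := by rw [hYsum2]
    | inr pc =>
      obtain ⟨p, r⟩ := pc
      have hp := congrFun (hs2 p) r
      simp only [Pi.add_apply, Pi.smul_apply, smul_eq_mul] at hp
      simp only [Matrix.mulVec, dotProduct, Pi.smul_apply, smul_eq_mul,
        Fintype.sum_sum_type, specialization, Matrix.map_apply, hvdef, Sum.elim_inl,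
        Sum.elim_inr]
      rw [show (∑ x : (Fin y × Fin w) × Fin m,
            (Complex.ofReal (if p = x.1 then Z r x.2 else 0)) * s x.1 x.2)
          = (Zc.mulVec (s p)) r from ?_, ← hp]
      · rfl
      · rw [Fintype.sum_prod_type]
        rw [Finset.sum_eq_single p]
        · simp [Matrix.mulVec, dotProduct, Zc, Matrix.map_apply]
        · intro q _ hq
          have hpq : p ≠ q := fun h => hq h.symm
          simp [hpq]
        · simp
end

section
/- Let M and M̂ be as in the single-component specialization construction. Suppose v is a (complex) vector with M̂ v = λ v and λ is not a root of the characteristic polynomial of Z. Then for every (i,j) ∈ P the component of v on the copy {(i,j)}×C is given by the eigenvector transfer formula v_{(i,j)} = (λI − Z)^{−1} W_j v_B. In particular v_{(i,j)} depends only on j, so any two copies of Z with the same incoming block W_j carry equal eigenvector components: v_{(i,j)} = v_{(i',j)} for all i, i'. -/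
open Matrix

/-- if `M̂ v = λ v` and `λ` is not a root of the characteristic polynomial of
`Z`, then each component of `v` on a copy of `Z` is given by the eigenvector transfer
formula `v_{(i,j)} = (λI − Z)⁻¹ W_j v_B`; in particular `v_{(i,j)} = v_{(i',j)}`. -/
theorem specialization_eigenvector_transfer
    {l m y w : ℕ} (hl : 1 ≤ l) (hm : 1 ≤ m) (hy : 1 ≤ y) (hw : 1 ≤ w)
    (U : Matrix (Fin l) (Fin l) ℝ) (Z : Matrix (Fin m) (Fin m) ℝ)
    (Y : Fin y → Matrix (Fin l) (Fin m) ℝ) (W : Fin w → Matrix (Fin m) (Fin l) ℝ)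
    (lam : ℂ) (v : (Fin l ⊕ ((Fin y × Fin w) × Fin m)) → ℂ)
    (heig : ((specialization U Z Y W).map Complex.ofReal).mulVec v = lam • v)
    (hlam : Polynomial.eval lam (Matrix.charpoly (Z.map Complex.ofReal)) ≠ 0) :
    (∀ (i : Fin y) (j : Fin w) (c : Fin m),
      v (Sum.inr ((i, j), c))
        = (((lam • (1 : Matrix (Fin m) (Fin m) ℂ) - Z.map Complex.ofReal)⁻¹
            * (W j).map Complex.ofReal).mulVec (fun b => v (Sum.inl b))) c)
    ∧ ∀ (i i' : Fin y) (j : Fin w) (c : Fin m),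
        v (Sum.inr ((i, j), c)) = v (Sum.inr ((i', j), c)) := by
  set A := Z.map Complex.ofReal with hA
  set Bm := lam • (1 : Matrix (Fin m) (Fin m) ℂ) - A with hBm
  -- determinant of Bm is nonzero
  have hdet : Bm.det ≠ 0 := by
    have h1 : Polynomial.eval lam A.charpoly
        = ((charmatrix A).map (Polynomial.eval lam)).det := by
      rw [Matrix.charpoly, ← Polynomial.coe_evalRingHom, RingHom.map_det,
        RingHom.mapMatrix_apply]
    have h2 : (charmatrix A).map (Polynomial.eval lam) = Bm := by
      ext a b
      by_cases h : a = b <;> simp [charmatrix_apply, Matrix.one_apply, h, diagonal, hBm]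
    rw [h1, h2] at hlam
    exact hlam
  have hunit : IsUnit Bm.det := isUnit_iff_ne_zero.mpr hdet
  -- the row equations
  have hrow : ∀ (i : Fin y) (j : Fin w) (c : Fin m),
      (∑ b, (W j c b : ℂ) * v (Sum.inl b))
        + (∑ c', (Z c c' : ℂ) * v (Sum.inr ((i, j), c')))
        = lam * v (Sum.inr ((i, j), c)) := by
    intro i j c
    have h := congrFun heig (Sum.inr ((i, j), c))
    simpa [mulVec, dotProduct, Fintype.sum_sum_type, Fintype.sum_prod_type, specialization,
      ite_and, apply_ite Complex.ofReal, ite_mul, zero_mul, Finset.sum_ite_eq,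
      Finset.mem_univ] using h
  have key : ∀ (i : Fin y) (j : Fin w),
      (fun c => v (Sum.inr ((i, j), c)))
        = ((Bm⁻¹ * (W j).map Complex.ofReal).mulVec (fun b => v (Sum.inl b))) := by
    intro i j
    have hB : Bm.mulVec (fun c => v (Sum.inr ((i, j), c)))
        = ((W j).map Complex.ofReal).mulVec (fun b => v (Sum.inl b)) := by
      ext c
      have := hrow i j c
      simp only [hBm, hA, mulVec, dotProduct, Matrix.sub_apply, Matrix.smul_apply,
        Matrix.one_apply, smul_eq_mul, mul_ite, mul_one, mul_zero, sub_mul, ite_mul,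
        zero_mul, Finset.sum_sub_distrib, Finset.sum_ite_eq, Finset.mem_univ, if_true,
        Matrix.map_apply]
      linear_combination -this
    calc (fun c => v (Sum.inr ((i, j), c)))
        = Bm⁻¹.mulVec (Bm.mulVec (fun c => v (Sum.inr ((i, j), c)))) := by
          rw [Matrix.mulVec_mulVec, Matrix.nonsing_inv_mul Bm hunit, Matrix.one_mulVec]
      _ = _ := by rw [hB, ← Matrix.mulVec_mulVec]
  refine ⟨fun i j c => congrFun (key i j) c, fun i i' j c => ?_⟩
  rw [congrFun (key i j) c, congrFun (key i' j) c]
end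

section
/- Let M and M̂ be as in the single-component specialization construction. Suppose (λ, u) is an eigenpair of M (viewed as a complex matrix) with λ not a root of the characteristic polynomial of Z, and suppose v satisfies M̂ v = λ v with v_B = u_B. Then for each fixed i ∈ {1,…,y}, summing the eigenvector components over all copies of Z with the same outgoing block Y_i recovers the original eigenvector component on Z: Σ_{j=1}^{w} v_{(i,j)} = u_C, where u_C is the restriction of u to the C-block of M. -/
/-! Summing the rows `({(i,j)} × C)` of `M̂ v = λ v` over `j` and using `v_B = u_B` shows that
`Σⱼ v_{(i,j)}` solves `Z x = λ x - W u_B`, which `u_C` solves too by the `C`-rows of `M u = λ u`.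
Their difference is then a `λ`-eigenvector of `Z`, hence zero since `λ` is not a root of the
characteristic polynomial of `Z`. -/

open Matrix

theorem Matrix.eq_zero_of_mulVec_eq_smul_of_eval_charpoly_ne_zero {n R : Type*} [Fintype n]
    [DecidableEq n] [CommRing R] [NoZeroDivisors R] {A : Matrix n n R} {t : R}
    (ht : A.charpoly.eval t ≠ 0) {x : n → R} (hx : A *ᵥ x = t • x) : x = 0 := by
  refine eq_zero_of_mulVec_eq_zero (by rwa [← eval_charpoly]) ?_
  rw [sub_mulVec, hx, scalar_apply, ← smul_one_eq_diagonal, smul_mulVec, one_mulVec, sub_self]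

section

variable {l m y w : ℕ} (U : Matrix (Fin l) (Fin l) ℝ) (Z : Matrix (Fin m) (Fin m) ℝ)
  (Y : Fin y → Matrix (Fin l) (Fin m) ℝ) (W : Fin w → Matrix (Fin m) (Fin l) ℝ)

theorem origMatrix_map_mulVec_comp_inr (u : Fin l ⊕ Fin m → ℂ) :
    ((origMatrix U Z Y W).map Complex.ofReal *ᵥ u) ∘ Sum.inr =
      ∑ j, (W j).map Complex.ofReal *ᵥ (u ∘ Sum.inl) + Z.map Complex.ofReal *ᵥ (u ∘ Sum.inr) := by
  have hW : (∑ j, W j).map Complex.ofReal = ∑ j, (W j).map Complex.ofReal :=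
    map_sum Complex.ofRealHom.toAddMonoidHom.mapMatrix W Finset.univ
  rw [origMatrix, fromBlocks_map, fromBlocks_mulVec, Sum.elim_comp_inr, hW, sum_mulVec]

theorem specialization_map_mulVec_inr (v : Fin l ⊕ ((Fin y × Fin w) × Fin m) → ℂ)
    (p : Fin y × Fin w) :
    (fun c => ((specialization U Z Y W).map Complex.ofReal *ᵥ v) (Sum.inr (p, c))) =
      (W p.2).map Complex.ofReal *ᵥ (v ∘ Sum.inl)
        + Z.map Complex.ofReal *ᵥ fun c => v (Sum.inr (p, c)) := by
  ext c
  simp [mulVec, dotProduct, specialization, Fintype.sum_sum_type, Fintype.sum_prod_type,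
    apply_ite Complex.ofReal, ite_mul, Finset.sum_ite_irrel, Finset.sum_ite_eq]

theorem specialization_sum_copies_mulVec {lam : ℂ} {v : Fin l ⊕ ((Fin y × Fin w) × Fin m) → ℂ}
    (hv : (specialization U Z Y W).map Complex.ofReal *ᵥ v = lam • v) (i : Fin y) :
    Z.map Complex.ofReal *ᵥ (∑ j, fun c => v (Sum.inr ((i, j), c))) =
      lam • (∑ j, fun c => v (Sum.inr ((i, j), c)))
        - ∑ j, (W j).map Complex.ofReal *ᵥ (v ∘ Sum.inl) := by
  have hrow (j : Fin w) : Z.map Complex.ofReal *ᵥ (fun c => v (Sum.inr ((i, j), c))) =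
      lam • (fun c => v (Sum.inr ((i, j), c))) - (W j).map Complex.ofReal *ᵥ (v ∘ Sum.inl) := by
    rw [eq_sub_iff_add_eq, add_comm, ← specialization_map_mulVec_inr U Z Y W v (i, j), hv]
    rfl
  rw [mulVec_sum, Finset.sum_congr rfl fun j _ => hrow j, Finset.sum_sub_distrib, Finset.smul_sum]

end

theorem specialization_eigenvector_sum_general
    {l m y w : ℕ}
    (U : Matrix (Fin l) (Fin l) ℝ) (Z : Matrix (Fin m) (Fin m) ℝ)
    (Y : Fin y → Matrix (Fin l) (Fin m) ℝ) (W : Fin w → Matrix (Fin m) (Fin l) ℝ)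
    (lam : ℂ) (u : (Fin l ⊕ Fin m) → ℂ)
    (heigM : ((origMatrix U Z Y W).map Complex.ofReal).mulVec u = lam • u)
    (hlam : Polynomial.eval lam (Matrix.charpoly (Z.map Complex.ofReal)) ≠ 0)
    (v : (Fin l ⊕ ((Fin y × Fin w) × Fin m)) → ℂ)
    (heigv : ((specialization U Z Y W).map Complex.ofReal).mulVec v = lam • v)
    (hvB : ∀ b : Fin l, v (Sum.inl b) = u (Sum.inl b)) :
    ∀ (i : Fin y) (c : Fin m),
      ∑ j : Fin w, v (Sum.inr ((i, j), c)) = u (Sum.inr c) := by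
  intro i c
  have hvB' : v ∘ Sum.inl = u ∘ Sum.inl := funext hvB
  have hsum := specialization_sum_copies_mulVec U Z Y W heigv i
  have huC : Z.map Complex.ofReal *ᵥ (u ∘ Sum.inr) =
      lam • (u ∘ Sum.inr) - ∑ j, (W j).map Complex.ofReal *ᵥ (u ∘ Sum.inl) := by
    rw [eq_sub_iff_add_eq, add_comm, ← origMatrix_map_mulVec_comp_inr U Z Y W, heigM]
    rfl
  have hdiff := eq_zero_of_mulVec_eq_smul_of_eval_charpoly_ne_zero hlam
    (x := (∑ j, fun c => v (Sum.inr ((i, j), c))) - u ∘ Sum.inr)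
    (by rw [mulVec_sub, hsum, huC, hvB', smul_sub]; abel)
  simpa [sub_eq_zero, Finset.sum_apply] using congrFun hdiff c

/-- if `(λ, u)` is an eigenpair of `M` (as a complex matrix), `λ` is not a
root of the characteristic polynomial of `Z`, and `M̂ v = λ v` with `v_B = u_B`, then for
each fixed `i`, summing the components of `v` over all copies of `Z` with the same outgoing
block `Y_i` recovers `u_C`: `Σⱼ v_{(i,j)} = u_C`. -/
theorem specialization_eigenvector_sum
    {l m y w : ℕ} (hl : 1 ≤ l) (hm : 1 ≤ m) (hy : 1 ≤ y) (hw : 1 ≤ w)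
    (U : Matrix (Fin l) (Fin l) ℝ) (Z : Matrix (Fin m) (Fin m) ℝ)
    (Y : Fin y → Matrix (Fin l) (Fin m) ℝ) (W : Fin w → Matrix (Fin m) (Fin l) ℝ)
    (lam : ℂ) (u : (Fin l ⊕ Fin m) → ℂ) (hu : u ≠ 0)
    (heigM : ((origMatrix U Z Y W).map Complex.ofReal).mulVec u = lam • u)
    (hlam : Polynomial.eval lam (Matrix.charpoly (Z.map Complex.ofReal)) ≠ 0)
    (v : (Fin l ⊕ ((Fin y × Fin w) × Fin m)) → ℂ)
    (heigv : ((specialization U Z Y W).map Complex.ofReal).mulVec v = lam • v)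
    (hvB : ∀ b : Fin l, v (Sum.inl b) = u (Sum.inl b)) :
    ∀ (i : Fin y) (c : Fin m),
      ∑ j : Fin w, v (Sum.inr ((i, j), c)) = u (Sum.inr c) :=
  specialization_eigenvector_sum_general U Z Y W lam u heigM hlam v heigv hvB
end

section
/- Eigenvector transfer along a chain of components: let k ≥ 1 and let C_1, …, C_k be square complex matrices (C_t of size m_t × m_t), let Y_0 be an m_1 × ℓ complex matrix and, for 1 ≤ t ≤ k−1, let Y_t be an m_{t+1} × m_t complex matrix. Let A be a square complex matrix whose index set contains pairwise disjoint blocks B (of size ℓ) and C_1, …, C_k, such that for each 1 ≤ t ≤ k the rows of A indexed by C_t are zero outside the columns indexed by B, C_{t−1} and C_t, with blocks A_{C_1 B} = Y_0, A_{C_t B} = 0 for t ≥ 2, A_{C_t C_{t−1}} = Y_{t−1} for t ≥ 2, and A_{C_t C_t} = C_t. If A v = λ v and λ is not an eigenvalue of any C_t, then the restriction of v to the block C_k satisfies v_{C_k} = (λI − C_k)^{−1} Y_{k−1} (λI − C_{k−1})^{−1} Y_{k−2} ⋯ (λI − C_1)^{−1} Y_0 v_B; that is, v_{C_k} equals the eigenvector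 transfer matrix of the chain applied to v_B. -/
open Matrix

lemma eval_charpoly' {n:ℕ} (M : Matrix (Fin n) (Fin n) ℂ) (lam : ℂ) :
    Polynomial.eval lam M.charpoly = (lam • (1 : Matrix (Fin n) (Fin n) ℂ) - M).det := by
  rw [Matrix.charpoly, ← Polynomial.coe_evalRingHom, RingHom.map_det]
  congr 1
  ext i j
  simp [Matrix.charmatrix_apply, Matrix.one_apply, Matrix.sub_apply, Matrix.smul_apply,
    Polynomial.eval_sub, Matrix.diagonal]
  split <;> simp

lemma solve_vec {n : ℕ} (M : Matrix (Fin n) (Fin n) ℂ) (lam : ℂ)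
    (hdet : Polynomial.eval lam M.charpoly ≠ 0) (w : Fin n → ℂ) (u : Fin n → ℂ)
    (h : (lam • (1:Matrix (Fin n) (Fin n) ℂ) - M).mulVec w = u) :
    w = (lam • (1:Matrix (Fin n) (Fin n) ℂ) - M)⁻¹.mulVec u := by
  rw [eval_charpoly'] at hdet
  have hd : IsUnit (lam • (1:Matrix (Fin n) (Fin n) ℂ) - M).det :=
    isUnit_iff_ne_zero.mpr hdet
  rw [← h, Matrix.mulVec_mulVec, Matrix.nonsing_inv_mul _ hd, Matrix.one_mulVec]


open Matrix

/-- The eigenvector transfer matrix of the chain `(B, Y₀, C₁, Y₁, C₂, …)` at spectral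
parameter `λ`: `T t = (λI − C_{t+1})⁻¹ Y_t (λI − C_t)⁻¹ Y_{t−1} ⋯ (λI − C_1)⁻¹ Y_0`
(here `t` is a 0-based index for the components `C_1, …, C_k`). -/
noncomputable def chainTransfer (k l : ℕ) (hk : 0 < k) (msz : Fin k → ℕ)
    (C : ∀ t : Fin k, Matrix (Fin (msz t)) (Fin (msz t)) ℂ)
    (Y0 : Matrix (Fin (msz ⟨0, hk⟩)) (Fin l) ℂ)
    (Ys : ∀ (t : ℕ) (h : t + 1 < k),
      Matrix (Fin (msz ⟨t + 1, h⟩)) (Fin (msz ⟨t, Nat.lt_of_succ_lt h⟩)) ℂ)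
    (lam : ℂ) : (t : ℕ) → (h : t < k) → Matrix (Fin (msz ⟨t, h⟩)) (Fin l) ℂ
  | 0, _ => (lam • 1 - C ⟨0, hk⟩)⁻¹ * Y0
  | t + 1, h =>
      (lam • 1 - C ⟨t + 1, h⟩)⁻¹ * Ys t h
        * chainTransfer k l hk msz C Y0 Ys lam t (Nat.lt_of_succ_lt h)

/-- eigenvector transfer along a chain of components.  If the rows of `A`
indexed by the blocks `C_1, …, C_k` have the indicated chain structure, `A v = λ v`, and
`λ` is not an eigenvalue of any `C_t`, then `v_{C_k} = T(λ) v_B` where `T(λ)` is the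
eigenvector transfer matrix of the chain. -/
theorem eigenvector_transfer_along_chain
    (k l : ℕ) (hk : 1 ≤ k) (msz : Fin k → ℕ)
    (C : ∀ t : Fin k, Matrix (Fin (msz t)) (Fin (msz t)) ℂ)
    (Y0 : Matrix (Fin (msz ⟨0, hk⟩)) (Fin l) ℂ)
    (Ys : ∀ (t : ℕ) (h : t + 1 < k),
      Matrix (Fin (msz ⟨t + 1, h⟩)) (Fin (msz ⟨t, Nat.lt_of_succ_lt h⟩)) ℂ)
    (κ : Type*) [Fintype κ]
    (A : Matrix (Fin l ⊕ ((Σ t : Fin k, Fin (msz t)) ⊕ κ))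
        (Fin l ⊕ ((Σ t : Fin k, Fin (msz t)) ⊕ κ)) ℂ)
    -- the `(C_1, B)` block of `A` is `Y₀`
    (hY0 : ∀ (p : Fin (msz ⟨0, hk⟩)) (b : Fin l),
      A (Sum.inr (Sum.inl ⟨⟨0, hk⟩, p⟩)) (Sum.inl b) = Y0 p b)
    -- the `(C_t, B)` blocks vanish for `t ≥ 2`
    (hCB : ∀ (t : Fin k), t ≠ ⟨0, hk⟩ → ∀ (p : Fin (msz t)) (b : Fin l),
      A (Sum.inr (Sum.inl ⟨t, p⟩)) (Sum.inl b) = 0)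
    -- the `(C_{t+1}, C_t)` blocks of `A` are the `Y_t`
    (hYs : ∀ (t : ℕ) (h : t + 1 < k) (p : Fin (msz ⟨t + 1, h⟩))
        (q : Fin (msz ⟨t, Nat.lt_of_succ_lt h⟩)),
      A (Sum.inr (Sum.inl ⟨⟨t + 1, h⟩, p⟩))
        (Sum.inr (Sum.inl ⟨⟨t, Nat.lt_of_succ_lt h⟩, q⟩)) = Ys t h p q)
    -- the diagonal `(C_t, C_t)` blocks of `A` are the `C_t`
    (hdiag : ∀ (t : Fin k) (p q : Fin (msz t)),
      A (Sum.inr (Sum.inl ⟨t, p⟩)) (Sum.inr (Sum.inl ⟨t, q⟩)) = C t p q)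
    -- rows indexed by `C_t` vanish on columns in a block `C_s` with `s ≠ t, t − 1`
    (hzero : ∀ (t s : Fin k), s ≠ t → (s : ℕ) + 1 ≠ (t : ℕ) →
      ∀ (p : Fin (msz t)) (q : Fin (msz s)),
      A (Sum.inr (Sum.inl ⟨t, p⟩)) (Sum.inr (Sum.inl ⟨s, q⟩)) = 0)
    -- rows indexed by `C_t` vanish on the remaining columns
    (hzero' : ∀ (t : Fin k) (p : Fin (msz t)) (x : κ),
      A (Sum.inr (Sum.inl ⟨t, p⟩)) (Sum.inr (Sum.inr x)) = 0)
    (lam : ℂ)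
    (hlam : ∀ t : Fin k, Polynomial.eval lam (Matrix.charpoly (C t)) ≠ 0)
    (v : (Fin l ⊕ ((Σ t : Fin k, Fin (msz t)) ⊕ κ)) → ℂ)
    (heig : A.mulVec v = lam • v) :
    ∀ p : Fin (msz ⟨k - 1, Nat.sub_lt hk Nat.one_pos⟩),
      v (Sum.inr (Sum.inl ⟨⟨k - 1, Nat.sub_lt hk Nat.one_pos⟩, p⟩))
        = (chainTransfer k l hk msz C Y0 Ys lam (k - 1)
            (Nat.sub_lt hk Nat.one_pos)).mulVec (fun b => v (Sum.inl b)) p := by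

  have row : ∀ (t : Fin k) (p : Fin (msz t)),
      (∑ b, A (Sum.inr (Sum.inl ⟨t,p⟩)) (Sum.inl b) * v (Sum.inl b))
      + ∑ s : Fin k, ∑ q, A (Sum.inr (Sum.inl ⟨t,p⟩)) (Sum.inr (Sum.inl ⟨s,q⟩))
          * v (Sum.inr (Sum.inl ⟨s,q⟩))
      = lam * v (Sum.inr (Sum.inl ⟨t,p⟩)) := by
    intro t p
    have h1 := congrFun heig (Sum.inr (Sum.inl ⟨t,p⟩))
    simp only [Matrix.mulVec, dotProduct, Fintype.sum_sum_type,
      Pi.smul_apply, smul_eq_mul, hzero' t p, zero_mul, Finset.sum_const_zero,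
      add_zero] at h1
    rw [← Finset.univ_sigma_univ, Finset.sum_sigma] at h1
    exact h1
  have key : ∀ (t : ℕ) (h : t < k) (p : Fin (msz ⟨t,h⟩)),
      v (Sum.inr (Sum.inl ⟨⟨t,h⟩,p⟩))
        = (chainTransfer k l hk msz C Y0 Ys lam t h).mulVec (fun b => v (Sum.inl b)) p := by
    intro t
    induction t with
    | zero =>
      intro h
      suffices hs : (fun q => v (Sum.inr (Sum.inl ⟨⟨0,hk⟩, q⟩)))
          = (lam • (1:Matrix (Fin (msz ⟨0,hk⟩)) (Fin (msz ⟨0,hk⟩)) ℂ) - C ⟨0,hk⟩)⁻¹.mulVec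
              (Y0.mulVec (fun b => v (Sum.inl b))) by
        intro p
        have h2 := congrFun hs p
        simpa [chainTransfer, ← Matrix.mulVec_mulVec] using h2
      apply solve_vec _ _ (hlam ⟨0,hk⟩)
      funext p
      rw [Matrix.sub_mulVec, Matrix.smul_mulVec, Matrix.one_mulVec,
        Pi.sub_apply, Pi.smul_apply]
      have h1 := row ⟨0,hk⟩ p
      have hsum : (∑ s : Fin k, ∑ q, A (Sum.inr (Sum.inl ⟨⟨0,hk⟩,p⟩)) (Sum.inr (Sum.inl ⟨s,q⟩))
          * v (Sum.inr (Sum.inl ⟨s,q⟩)))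
          = ∑ q, C ⟨0,hk⟩ p q * v (Sum.inr (Sum.inl ⟨⟨0,hk⟩,q⟩)) := by
        rw [Finset.sum_eq_single (⟨0,hk⟩ : Fin k)]
        · exact Finset.sum_congr rfl fun q _ => by rw [hdiag]
        · intro s _ hs
          exact Finset.sum_eq_zero fun q _ => by rw [hzero _ s hs (by simp), zero_mul]
        · simp
      have hB : (∑ b, A (Sum.inr (Sum.inl ⟨⟨0,hk⟩,p⟩)) (Sum.inl b) * v (Sum.inl b))
          = ∑ b, Y0 p b * v (Sum.inl b) :=
        Finset.sum_congr rfl fun b _ => by rw [hY0]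
      rw [hsum, hB] at h1
      simp only [Matrix.mulVec, dotProduct, smul_eq_mul]
      linear_combination -h1
    | succ t ih =>
      intro h
      suffices hs : (fun q => v (Sum.inr (Sum.inl ⟨⟨t+1,h⟩, q⟩)))
          = (lam • (1:Matrix (Fin (msz ⟨t+1,h⟩)) (Fin (msz ⟨t+1,h⟩)) ℂ) - C ⟨t+1,h⟩)⁻¹.mulVec
              ((Ys t h).mulVec
                (fun q => v (Sum.inr (Sum.inl ⟨⟨t, Nat.lt_of_succ_lt h⟩, q⟩)))) by
        intro p
        have h2 := congrFun hs p
        have h3 : (fun q => v (Sum.inr (Sum.inl ⟨⟨t, Nat.lt_of_succ_lt h⟩, q⟩)))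
            = (chainTransfer k l hk msz C Y0 Ys lam t (Nat.lt_of_succ_lt h)).mulVec
                (fun b => v (Sum.inl b)) := funext (ih (Nat.lt_of_succ_lt h))
        rw [h3] at h2
        simpa [chainTransfer, ← Matrix.mulVec_mulVec] using h2
      apply solve_vec _ _ (hlam ⟨t+1,h⟩)
      funext p
      rw [Matrix.sub_mulVec, Matrix.smul_mulVec, Matrix.one_mulVec,
        Pi.sub_apply, Pi.smul_apply]
      have h1 := row ⟨t+1,h⟩ p
      have hB : (∑ b, A (Sum.inr (Sum.inl ⟨⟨t+1,h⟩,p⟩)) (Sum.inl b) * v (Sum.inl b)) = 0 :=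
        Finset.sum_eq_zero fun b _ => by
          rw [hCB _ (by simp [Fin.ext_iff]), zero_mul]
      have hsum : (∑ s : Fin k, ∑ q, A (Sum.inr (Sum.inl ⟨⟨t+1,h⟩,p⟩)) (Sum.inr (Sum.inl ⟨s,q⟩))
          * v (Sum.inr (Sum.inl ⟨s,q⟩)))
          = (∑ q, Ys t h p q * v (Sum.inr (Sum.inl ⟨⟨t, Nat.lt_of_succ_lt h⟩,q⟩)))
            + ∑ q, C ⟨t+1,h⟩ p q * v (Sum.inr (Sum.inl ⟨⟨t+1,h⟩,q⟩)) := by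
        rw [← Finset.add_sum_erase _ _ (Finset.mem_univ (⟨t, Nat.lt_of_succ_lt h⟩ : Fin k))]
        congr 1
        · exact Finset.sum_congr rfl fun q _ => by rw [hYs]
        · rw [Finset.sum_eq_single_of_mem (⟨t+1,h⟩ : Fin k)
            (Finset.mem_erase.mpr ⟨by simp [Fin.ext_iff], Finset.mem_univ _⟩)]
          · exact Finset.sum_congr rfl fun q _ => by rw [hdiag]
          · intro s hsmem hs
            apply Finset.sum_eq_zero
            intro q _
            have hne := Finset.ne_of_mem_erase hsmem
            have hs2 : (s:ℕ) + 1 ≠ ((⟨t+1,h⟩ : Fin k):ℕ) := by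
              show (s:ℕ) + 1 ≠ t + 1
              intro hc
              exact hne (Fin.ext (show (s:ℕ) = ((⟨t, Nat.lt_of_succ_lt h⟩:Fin k):ℕ) from
                show (s:ℕ) = t by omega))
            rw [hzero _ s hs hs2, zero_mul]
      rw [hB, zero_add, hsum] at h1
      simp only [Matrix.mulVec, dotProduct, smul_eq_mul]
      linear_combination -h1
  exact key (k-1) (Nat.sub_lt hk Nat.one_pos)
end

section
/- Network stability: let n ≥ 1, let X_1, …, X_n be nonempty closed subsets of ℝ, let 𝒳 = {x ∈ ℝ^n : x_i ∈ X_i for all i}, and let F : ℝ^n → ℝ^n map 𝒳 into itself. Suppose Λ is an n×n real matrix with nonnegative entries such that |F_i(x) − F_i(y)| ≤ Σ_{j=1}^n Λ_{ij} |x_j − y_j| for all x, y ∈ 𝒳 and all i, and suppose the spectral radius satisfies ρ(Λ) < 1. Then F is globally stable on 𝒳: there exists x* ∈ 𝒳 with F(x*) = x* such that for every x⁰ ∈ 𝒳 the iterates F^k(x⁰) converge to x* as k → ∞. -/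
open Matrix

/-- The spectral radius of a square real matrix: the maximum of `|λ|` over the complex
roots `λ` of its characteristic polynomial (and `0` if there are none). -/
noncomputable def specRad {n : Type*} [Fintype n] [DecidableEq n]
    (A : Matrix n n ℝ) : ℝ :=
  (((Matrix.charpoly (A.map Complex.ofReal)).roots).map (fun z : ℂ => ‖z‖)).fold max 0

/-! `F^[k]` satisfies the componentwise bound `|F^[k] x - F^[k] y| ≤ Λ ^ k *ᵥ |x - y|` on `𝒳`,
so it is `‖Λ ^ k‖`-Lipschitz for the sup norm and the `L^∞` operator norm. Gelfand's formula
turns `ρ(Λ) < 1` into `‖Λ ^ k‖ ≤ r ^ k` for some `r < 1` and all large `k`, so these Lipschitz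
constants are summable: the orbit of any point of `𝒳` is Cauchy, its limit lies in the closed
set `𝒳` and is fixed by `F`, and every other orbit converges to it because `‖Λ ^ k‖ → 0`. -/

open Filter Topology Set Function
open scoped NNReal ENNReal Matrix.Norms.Operator

theorem Multiset.le_fold_max {α : Type*} [LinearOrder α] {s : Multiset α} {a : α} (b : α)
    (h : a ∈ s) : a ≤ s.fold max b := by
  obtain ⟨t, rfl⟩ := Multiset.exists_cons_of_mem h
  rw [Multiset.fold_cons_left]
  exact le_max_left _ _

theorem eventually_norm_pow_lt_of_spectralRadius_lt {A : Type*} [NormedRing A]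
    [NormedAlgebra ℂ A] [CompleteSpace A] (a : A) {r : ℝ≥0} (h : spectralRadius ℂ a < r) :
    ∀ᶠ k : ℕ in atTop, ‖a ^ k‖ < r ^ k := by
  have hgelfand := spectrum.pow_nnnorm_pow_one_div_tendsto_nhds_spectralRadius a
  filter_upwards [hgelfand.eventually_lt_const h, eventually_ge_atTop 1] with k hk hk1
  have hkpos : (0 : ℝ) < k := by exact_mod_cast hk1
  have hpow := ENNReal.rpow_lt_rpow hk hkpos
  rw [← ENNReal.rpow_mul, one_div_mul_cancel hkpos.ne', ENNReal.rpow_one,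
    ENNReal.rpow_natCast] at hpow
  exact_mod_cast hpow

theorem summable_norm_pow_of_spectralRadius_lt_one {A : Type*} [NormedRing A]
    [NormedAlgebra ℂ A] [CompleteSpace A] (a : A) (h : spectralRadius ℂ a < 1) :
    Summable fun k : ℕ => ‖a ^ k‖ := by
  obtain ⟨r, har, hr1⟩ := ENNReal.lt_iff_exists_nnreal_btwn.mp h
  have hgeom := summable_geometric_of_lt_one r.2 (by exact_mod_cast hr1)
  refine .of_norm_bounded_eventually_nat hgeom ?_
  filter_upwards [eventually_norm_pow_lt_of_spectralRadius_lt a har] with k hk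
  rw [norm_norm]
  exact hk.le

namespace Matrix

theorem linfty_opNorm_map_ofReal {m n : Type*} [Fintype m] [Fintype n] (A : Matrix m n ℝ) :
    ‖A.map Complex.ofReal‖ = ‖A‖ := by
  simp [linfty_opNorm_def]

variable {n : Type*} [Fintype n] [DecidableEq n]

theorem norm_le_specRad_of_mem_spectrum {A : Matrix n n ℝ} {μ : ℂ}
    (hμ : μ ∈ spectrum ℂ (A.map Complex.ofReal)) : ‖μ‖ ≤ specRad A :=
  Multiset.le_fold_max 0 <| Multiset.mem_map_of_mem _ <|
    (Polynomial.mem_roots (charpoly_monic _).ne_zero).mpr (mem_spectrum_iff_isRoot_charpoly.mp hμ)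

theorem spectralRadius_map_ofReal_le_specRad (A : Matrix n n ℝ) :
    spectralRadius ℂ (A.map Complex.ofReal) ≤ ENNReal.ofReal (specRad A) :=
  iSup₂_le fun _ hμ => by
    rw [← enorm_eq_nnnorm, ← ofReal_norm]
    exact ENNReal.ofReal_le_ofReal (norm_le_specRad_of_mem_spectrum hμ)

theorem summable_norm_pow_of_specRad_lt_one {A : Matrix n n ℝ} (hA : specRad A < 1) :
    Summable fun k : ℕ => ‖A ^ k‖ := by
  have hspec : spectralRadius ℂ (A.map Complex.ofReal) < 1 :=
    (spectralRadius_map_ofReal_le_specRad A).trans_lt (ENNReal.ofReal_lt_one.mpr hA)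
  refine (summable_norm_pow_of_spectralRadius_lt_one _ hspec).congr fun k => ?_
  rw [← linfty_opNorm_map_ofReal (A ^ k)]
  exact congrArg norm (A.map_pow Complex.ofRealHom k).symm

end Matrix

theorem Pi.norm_abs {ι : Type*} [Fintype ι] (v : ι → ℝ) : ‖|v|‖ = ‖v‖ := by
  simp [Pi.norm_def, Pi.abs_apply]

theorem Matrix.mulVec_le_mulVec_of_nonneg {m ι R : Type*} [Fintype ι] [Semiring R]
    [PartialOrder R] [IsOrderedRing R] {A : Matrix m ι R} (hA : ∀ i j, 0 ≤ A i j) {v w : ι → R}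
    (hvw : v ≤ w) : A *ᵥ v ≤ A *ᵥ w :=
  fun i => dotProduct_le_dotProduct_of_nonneg_left hvw (hA i)

section Majorant

variable {ι : Type*} [Fintype ι] [DecidableEq ι] {F : (ι → ℝ) → ι → ℝ} {S : Set (ι → ℝ)}
  {Λ : Matrix ι ι ℝ}

theorem abs_iterate_sub_le_pow_mulVec (hΛ : ∀ i j, 0 ≤ Λ i j) (hFS : MapsTo F S S)
    (hLip : ∀ x ∈ S, ∀ y ∈ S, |F x - F y| ≤ Λ *ᵥ |x - y|) {x y : ι → ℝ} (hx : x ∈ S)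
    (hy : y ∈ S) (k : ℕ) : |F^[k] x - F^[k] y| ≤ Λ ^ k *ᵥ |x - y| := by
  induction k with
  | zero => simp
  | succ k ih =>
    calc |F^[k + 1] x - F^[k + 1] y|
        ≤ Λ *ᵥ |F^[k] x - F^[k] y| := by
          simpa only [iterate_succ_apply'] using hLip _ (hFS.iterate k hx) _ (hFS.iterate k hy)
      _ ≤ Λ *ᵥ (Λ ^ k *ᵥ |x - y|) := mulVec_le_mulVec_of_nonneg hΛ ih
      _ = Λ ^ (k + 1) *ᵥ |x - y| := by rw [pow_succ', mulVec_mulVec]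

theorem dist_iterate_le_norm_pow_mul (hΛ : ∀ i j, 0 ≤ Λ i j) (hFS : MapsTo F S S)
    (hLip : ∀ x ∈ S, ∀ y ∈ S, |F x - F y| ≤ Λ *ᵥ |x - y|) {x y : ι → ℝ} (hx : x ∈ S)
    (hy : y ∈ S) (k : ℕ) : dist (F^[k] x) (F^[k] y) ≤ ‖Λ ^ k‖ * dist x y := by
  have hbound := abs_iterate_sub_le_pow_mulVec hΛ hFS hLip hx hy k
  rw [dist_eq_norm, dist_eq_norm, ← Pi.norm_abs (x - y)]
  refine (pi_norm_le_iff_of_nonneg (by positivity)).mpr fun i => ?_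
  calc ‖(F^[k] x - F^[k] y) i‖ = |F^[k] x - F^[k] y| i := Real.norm_eq_abs _
    _ ≤ (Λ ^ k *ᵥ |x - y|) i := hbound i
    _ ≤ ‖Λ ^ k *ᵥ |x - y|‖ := (Real.le_norm_self _).trans (norm_le_pi_norm _ i)
    _ ≤ ‖Λ ^ k‖ * ‖|x - y|‖ := linfty_opNorm_mulVec _ _

end Majorant

theorem exists_isFixedPt_tendsto_iterate_of_summable {α : Type*} [MetricSpace α]
    [CompleteSpace α] {F : α → α} {S : Set α} (hSne : S.Nonempty) (hScl : IsClosed S)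
    (hFS : MapsTo F S S) {c : ℕ → ℝ} (hc : Summable c)
    (hdist : ∀ x ∈ S, ∀ y ∈ S, ∀ k, dist (F^[k] x) (F^[k] y) ≤ c k * dist x y) :
    ∃ z ∈ S, IsFixedPt F z ∧ ∀ x ∈ S, Tendsto (fun k => F^[k] x) atTop (𝓝 z) := by
  obtain ⟨p, hp⟩ := hSne
  have hcauchy : CauchySeq fun k => F^[k] p := by
    refine cauchySeq_of_dist_le_of_summable _ (fun k => ?_) (hc.mul_right (dist p (F p)))
    simpa only [iterate_succ_apply] using hdist p hp (F p) (hFS hp) k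
  obtain ⟨z, hz⟩ := cauchySeq_tendsto_of_complete hcauchy
  have hzS : z ∈ S := hScl.mem_of_tendsto hz (Eventually.of_forall fun k => hFS.iterate k hp)
  have htoFz : Tendsto (fun k => F (F^[k] p)) atTop (𝓝 (F z)) := by
    refine tendsto_iff_dist_tendsto_zero.mpr (squeeze_zero (fun _ => dist_nonneg)
      (fun k => ?_) (by simpa using (tendsto_iff_dist_tendsto_zero.mp hz).const_mul (c 1)))
    simpa using hdist _ (hFS.iterate k hp) z hzS 1
  have hfix : IsFixedPt F z := tendsto_nhds_unique htoFz <|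
    (hz.comp (tendsto_add_atTop_nat 1)).congr fun k => iterate_succ_apply' F k p
  refine ⟨z, hzS, hfix, fun x hx => tendsto_iff_dist_tendsto_zero.mpr ?_⟩
  refine squeeze_zero (fun _ => dist_nonneg) (fun k => ?_)
    (by simpa using hc.tendsto_atTop_zero.mul_const (dist x z))
  simpa only [(hfix.iterate k).eq] using hdist x hx z hzS k

theorem network_stability_general
    {n : ℕ} (X : Fin n → Set ℝ)
    (hXne : ∀ i, (X i).Nonempty) (hXcl : ∀ i, IsClosed (X i))
    (F : (Fin n → ℝ) → (Fin n → ℝ))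
    (hF : ∀ x : Fin n → ℝ, (∀ i, x i ∈ X i) → ∀ i, F x i ∈ X i)
    (Λ : Matrix (Fin n) (Fin n) ℝ) (hΛ : ∀ i j, 0 ≤ Λ i j)
    (hLip : ∀ x y : Fin n → ℝ, (∀ i, x i ∈ X i) → (∀ i, y i ∈ X i) →
      ∀ i, |F x i - F y i| ≤ ∑ j, Λ i j * |x j - y j|)
    (hρ : specRad Λ < 1) :
    ∃ xstar : Fin n → ℝ, (∀ i, xstar i ∈ X i) ∧ F xstar = xstar ∧
      ∀ x0 : Fin n → ℝ, (∀ i, x0 i ∈ X i) →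
        Filter.Tendsto (fun k => F^[k] x0) Filter.atTop (nhds xstar) := by
  have hFS : MapsTo F (univ.pi X) (univ.pi X) := fun x hx =>
    mem_univ_pi.mpr (hF x (mem_univ_pi.mp hx))
  have hmajorant : ∀ x ∈ univ.pi X, ∀ y ∈ univ.pi X, |F x - F y| ≤ Λ *ᵥ |x - y| :=
    fun x hx y hy => hLip x y (mem_univ_pi.mp hx) (mem_univ_pi.mp hy)
  obtain ⟨z, hz, hfix, hconv⟩ := exists_isFixedPt_tendsto_iterate_of_summable
    (univ_pi_nonempty_iff.mpr hXne) (isClosed_set_pi fun i _ => hXcl i) hFS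
    (summable_norm_pow_of_specRad_lt_one hρ)
    fun x hx y hy k => dist_iterate_le_norm_pow_mul hΛ hFS hmajorant hx hy k
  exact ⟨z, mem_univ_pi.mp hz, hfix, fun x0 hx0 => hconv x0 (mem_univ_pi.mpr hx0)⟩

/-- network stability.  If `F` maps the product state space
`𝒳 = Π X_i` into itself, `Λ` is a nonnegative matrix with
`|F_i(x) − F_i(y)| ≤ Σ_j Λ_{ij} |x_j − y_j|` on `𝒳`, and `ρ(Λ) < 1`, then `F` is globally
stable on `𝒳`: it has a fixed point `x* ∈ 𝒳` to which all orbits starting in `𝒳`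
converge. -/
theorem network_stability
    {n : ℕ} (hn : 1 ≤ n) (X : Fin n → Set ℝ)
    (hXne : ∀ i, (X i).Nonempty) (hXcl : ∀ i, IsClosed (X i))
    (F : (Fin n → ℝ) → (Fin n → ℝ))
    (hF : ∀ x : Fin n → ℝ, (∀ i, x i ∈ X i) → ∀ i, F x i ∈ X i)
    (Λ : Matrix (Fin n) (Fin n) ℝ) (hΛ : ∀ i j, 0 ≤ Λ i j)
    (hLip : ∀ x y : Fin n → ℝ, (∀ i, x i ∈ X i) → (∀ i, y i ∈ X i) →
      ∀ i, |F x i - F y i| ≤ ∑ j, Λ i j * |x j - y j|)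
    (hρ : specRad Λ < 1) :
    ∃ xstar : Fin n → ℝ, (∀ i, xstar i ∈ X i) ∧ F xstar = xstar ∧
      ∀ x0 : Fin n → ℝ, (∀ i, x0 i ∈ X i) →
        Filter.Tendsto (fun k => F^[k] x0) Filter.atTop (nhds xstar) :=
  network_stability_general X hXne hXcl F hF Λ hΛ hLip hρ
end
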